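/- arXiv:2408.04238 — 5 statements merged into one kernel-verified Lean document; each statement's English description precedes it below -/
import Mathlib

section
/- In a byte-granularity model where NVM records are partial writes (offset, length, data) within a page and disk write-backs store the entire current page, if Algorithm 2 is followed (each write-back additionally appends a WRITEBACK marker record to the NVM log, and recovery replays, on top of the disk page, all NVM write records appearing after the last WRITEBACK marker, in order), then after any crash the recovered page equals the page-cache contents at the time of the last sync or write-back before the crash; in particular every byte written by a write that was followed by a sync before the crash is present in the recovered page, unless overwritten by a later synced or written-back write. -/
/- Byte-granularity model: a page is a function from offsets to bytes; a
   record is a partial overwrite (off, len, data) within the page. -/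

/-- A page of `n` bytes. -/
abbrev Page (n : ℕ) := Fin n → UInt8

/-- A partial-write record: bytes `[off, off+len)` get `data 0, …, data (len-1)`. -/
structure Rec (n : ℕ) where
  off  : ℕ
  len  : ℕ
  data : ℕ → UInt8
  wf   : off + len ≤ n

/-- `r` covers offset `i`. -/
def covers {n : ℕ} (r : Rec n) (i : Fin n) : Prop :=
  r.off ≤ i.val ∧ i.val < r.off + r.len

/-- Apply one partial-write record to a page. -/
def applyRec {n : ℕ} (r : Rec n) (p : Page n) : Page n := fun i =>
  if r.off ≤ i.val ∧ i.val < r.off + r.len then r.data (i.val - r.off) else p i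

/-- Apply a list of records in order (sequential overwrite application). -/
def applyRecs {n : ℕ} (rs : List (Rec n)) (p : Page n) : Page n :=
  rs.foldl (fun p r => applyRec r p) p

/-- NVM log entries: a partial WRITE record, or a WRITEBACK marker. -/
inductive LogEntry (n : ℕ)
  | wr (r : Rec n)
  | wb

/-- State: page cache, disk page, NVM log. -/
structure St (n : ℕ) where
  cache : Page n
  disk  : Page n
  log   : List (LogEntry n)

/-- Operations: an arbitrary-length sync write (applied to the cache and
    appended to the NVM log), or a write-back (whole cache page copied to
    disk, WRITEBACK marker appended to the NVM log — Algorithm 2). -/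
inductive Ev (n : ℕ)
  | syncWrite (r : Rec n)
  | writeback

def step {n : ℕ} (s : St n) : Ev n → St n
  | .syncWrite r => { s with cache := applyRec r s.cache, log := s.log ++ [.wr r] }
  | .writeback   => { s with disk := s.cache, log := s.log ++ [.wb] }

def run {n : ℕ} (s : St n) (tr : List (Ev n)) : St n := tr.foldl step s

/-- The WRITE records appearing after the last WRITEBACK marker, in log order. -/
def suffixRecords {n : ℕ} (log : List (LogEntry n)) : List (Rec n) :=
  log.foldl (fun acc e => match e with | .wb => [] | .wr r => acc ++ [r]) []

/-- Algorithm 2 recovery: replay, on top of the disk page, all NVM WRITE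
    records after the last WRITEBACK marker, in order. -/
def recover {n : ℕ} (s : St n) : Page n := applyRecs (suffixRecords s.log) s.disk

/-!
The invariant `recover s = s.cache` holds in the initial state and is preserved by every
step: a sync write appends to the replay suffix exactly the record it applies to the cache,
and a write-back empties the suffix while making the disk equal to the cache. The byte-level
claim then follows because the last write covering byte `i` determines the cache at `i`.
-/

section Algorithm2

variable {n : ℕ}

theorem applyRec_of_covers {r : Rec n} {i : Fin n} (h : covers r i) (p : Page n) :
    applyRec r p i = r.data (i.val - r.off) :=
  if_pos h

theorem applyRec_of_not_covers {r : Rec n} {i : Fin n} (h : ¬ covers r i) (p : Page n) :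
    applyRec r p i = p i :=
  if_neg h

@[simp]
theorem applyRecs_nil (p : Page n) : applyRecs [] p = p := rfl

@[simp]
theorem applyRecs_append_singleton (rs : List (Rec n)) (r : Rec n) (p : Page n) :
    applyRecs (rs ++ [r]) p = applyRec r (applyRecs rs p) :=
  List.foldl_concat ..

@[simp]
theorem suffixRecords_append_wr (log : List (LogEntry n)) (r : Rec n) :
    suffixRecords (log ++ [.wr r]) = suffixRecords log ++ [r] :=
  List.foldl_concat ..

@[simp]
theorem suffixRecords_append_wb (log : List (LogEntry n)) :
    suffixRecords (log ++ [.wb]) = [] :=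
  List.foldl_concat ..

theorem run_cons (s : St n) (e : Ev n) (tr : List (Ev n)) :
    run s (e :: tr) = run (step s e) tr := rfl

theorem run_append (s : St n) (t₁ t₂ : List (Ev n)) :
    run s (t₁ ++ t₂) = run (run s t₁) t₂ :=
  List.foldl_append

theorem recover_step {s : St n} (h : recover s = s.cache) (e : Ev n) :
    recover (step s e) = (step s e).cache := by
  cases e with
  | syncWrite r => simp [recover, step, ← h]
  | writeback => simp [recover, step]

theorem recover_run {s : St n} (h : recover s = s.cache) (tr : List (Ev n)) :
    recover (run s tr) = (run s tr).cache := by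
  induction tr generalizing s with
  | nil => exact h
  | cons e tr ih => exact ih (recover_step h e)

theorem run_cache_of_not_covers (s : St n) {tr : List (Ev n)} {i : Fin n}
    (h : ∀ r, Ev.syncWrite r ∈ tr → ¬ covers r i) : (run s tr).cache i = s.cache i := by
  induction tr generalizing s with
  | nil => rfl
  | cons e tr ih =>
    rw [run_cons, ih _ fun r hr => h r (List.mem_cons_of_mem e hr)]
    cases e with
    | syncWrite r => exact applyRec_of_not_covers (h r List.mem_cons_self) s.cache
    | writeback => rfl

end Algorithm2

/-- With Algorithm 2, after any crash the recovered page
    equals the page-cache contents at the time of the last sync or write-back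
    before the crash (= the final cache, since only these events occur); in
    particular every byte written by a synced write is present in the
    recovered page unless overwritten by a later synced or written-back
    write. -/
theorem algorithm2_recovery_correct (n : ℕ) (p₀ : Page n) (tr : List (Ev n)) :
    recover (run ⟨p₀, p₀, []⟩ tr) = (run ⟨p₀, p₀, []⟩ tr).cache ∧
    (∀ t₁ r t₂, tr = t₁ ++ [Ev.syncWrite r] ++ t₂ →
      ∀ i : Fin n, covers r i →
        (∀ r', Ev.syncWrite r' ∈ t₂ → ¬ covers r' i) →
        recover (run ⟨p₀, p₀, []⟩ tr) i = r.data (i.val - r.off)) := by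
  have hrecover := recover_run (s := ⟨p₀, p₀, []⟩) rfl tr
  refine ⟨hrecover, fun t₁ r t₂ htr i hcov hlater => ?_⟩
  rw [hrecover, htr, run_append, run_cache_of_not_covers _ hlater, run_append]
  exact applyRec_of_covers hcov _
end

section
/- In the write-back-duration model of Algorithm 3, replaying already-persisted writes is harmless: if a crash occurs after wb^r but before wb^e, so the disk page already contains the effects of all synced writes with vid < v for some v ≥ the exp_vid of the unpersisted write-back, then applying all NVM WRITE records since the last persisted WRITEBACK (which includes some records whose effects are already on disk) to the disk page yields the correct final page equal to the cache at the last sync before the crash. -/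
lemma applyRecs_id_or_indep {n : ℕ} (rs : List (Rec n)) (i : Fin n) :
    (∀ p : Page n, applyRecs rs p i = p i) ∨
    (∀ p q : Page n, applyRecs rs p i = applyRecs rs q i) := by
  induction rs with
  | nil => left; intro p; rfl
  | cons r rs ih =>
    rcases ih with h | h
    · by_cases hc : r.off ≤ i.val ∧ i.val < r.off + r.len
      · right; intro p q
        show applyRecs rs (applyRec r p) i = applyRecs rs (applyRec r q) i
        rw [h, h]; simp [applyRec, hc]
      · left; intro p
        show applyRecs rs (applyRec r p) i = p i
        rw [h]; simp [applyRec, hc]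
    · right; intro p q; exact h _ _

lemma applyRecs_congr_pt {n : ℕ} (rs : List (Rec n)) (i : Fin n)
    (p q : Page n) (hpq : p i = q i) : applyRecs rs p i = applyRecs rs q i := by
  rcases applyRecs_id_or_indep rs i with h | h
  · rw [h, h, hpq]
  · exact h p q

/-- Replaying already-persisted writes is harmless.  Let
    `rs₁ ++ rs₂` be the WRITE records (in order) since the last persisted
    WRITEBACK, `base` the disk page at that WRITEBACK, and suppose the crash
    occurred after wb^r but before wb^e so that the disk snapshot already
    contains the effects of the prefix `rs₁` (`disk = applyRecs rs₁ base`).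
    Then replaying all records since the last persisted WRITEBACK onto the
    disk — double-applying `rs₁` — still yields the correct final page. -/
theorem replay_persisted_writes_harmless (n : ℕ) (base disk : Page n)
    (rs₁ rs₂ : List (Rec n)) (hdisk : disk = applyRecs rs₁ base) :
    applyRecs (rs₁ ++ rs₂) disk = applyRecs (rs₁ ++ rs₂) base := by
  funext i
  have h12 : ∀ p : Page n, applyRecs (rs₁ ++ rs₂) p = applyRecs rs₂ (applyRecs rs₁ p) := by
    intro p; simp [applyRecs, List.foldl_append]
  rw [h12, h12]
  apply applyRecs_congr_pt
  rcases applyRecs_id_or_indep rs₁ i with h | h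
  · rw [h, hdisk]
  · exact h _ _
end

section
/- For sequential application of partial overwrite records, the final value at each offset is the data of the last applied record covering that offset, or the base page's value if no record covers it: apply rs p at offset i equals (the byte contributed by the last record in rs covering i) if such a record exists, else p i. -/
lemma applyRecs_append {n : ℕ} (rs : List (Rec n)) (r : Rec n) (p : Page n) :
    applyRecs (rs ++ [r]) p = applyRec r (applyRecs rs p) := by
  simp [applyRecs, List.foldl_append]

/-- Closed form of sequential overwrite application: at each
    offset `i`, `applyRecs rs p i` is the byte contributed by the last record
    in `rs` covering `i`, or `p i` if no record covers `i`. -/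
theorem applyRecs_closed_form (n : ℕ) (rs : List (Rec n)) (p : Page n) (i : Fin n) :
    (∃ a r b, rs = a ++ r :: b ∧ covers r i ∧ (∀ r' ∈ b, ¬ covers r' i) ∧
      applyRecs rs p i = r.data (i.val - r.off)) ∨
    ((∀ r ∈ rs, ¬ covers r i) ∧ applyRecs rs p i = p i) := by
  induction rs using List.reverseRecOn with
  | nil => right; simp [applyRecs]
  | append_singleton rs r ih =>
    rw [applyRecs_append]
    by_cases h : covers r i
    · left
      exact ⟨rs, r, [], rfl, h, by simp, by simp [applyRec, h.1, h.2]⟩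
    · have hval : applyRec r (applyRecs rs p) i = applyRecs rs p i := by
        simp only [applyRec]; rw [if_neg (by exact h)]
      rcases ih with ⟨a, r', b, hrs, hc, hb, hv⟩ | ⟨hnone, hv⟩
      · left
        refine ⟨a, r', b ++ [r], by rw [hrs]; simp, hc, ?_, by rw [hval, hv]⟩
        intro r'' hr''
        rcases List.mem_append.1 hr'' with h1 | h1
        · exact hb _ h1
        · simp at h1; subst h1; exact h
      · right
        refine ⟨?_, by rw [hval, hv]⟩
        intro r'' hr''
        rcases List.mem_append.1 hr'' with h1 | h1
        · exact hnone _ h1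
        · simp at h1; subst h1; exact h
end

section
/- Overwrite-record application is idempotent on suffixes: for any page p and record lists rs₁, rs₂, apply (rs₁ ++ rs₂) (apply rs₂' p) = apply (rs₁ ++ rs₂) p whenever every offset covered by some record in rs₂' is also covered by some record in rs₁ ++ rs₂. In particular apply rs (apply rs p) = apply rs p. -/
/-- Offset `i` is covered by some record in `rs`. -/
def coveredBy {n : ℕ} (rs : List (Rec n)) (i : Fin n) : Prop :=
  ∃ r ∈ rs, covers r i

/- Each offset of `applyRecs rs p` is read from the last record of `rs` covering it, or from `p`
if there is none; so `applyRecs rs` only sees `p` at the offsets `rs` does not cover, and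
`applyRecs rs'` changes `p` only at offsets `rs'` covers, which by hypothesis `rs` covers too. -/

theorem applyRec_apply_of_covers {n : ℕ} {r : Rec n} {i : Fin n} (h : covers r i) (p : Page n) :
    applyRec r p i = r.data (i.val - r.off) :=
  if_pos h

theorem applyRec_apply_of_not_covers {n : ℕ} {r : Rec n} {i : Fin n} (h : ¬ covers r i)
    (p : Page n) : applyRec r p i = p i :=
  if_neg h

theorem applyRecs_cons {n : ℕ} (r : Rec n) (rs : List (Rec n)) (p : Page n) :
    applyRecs (r :: rs) p = applyRecs rs (applyRec r p) :=
  rfl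

theorem coveredBy_cons {n : ℕ} {r : Rec n} {rs : List (Rec n)} {i : Fin n} :
    coveredBy (r :: rs) i ↔ covers r i ∨ coveredBy rs i := by
  simp [coveredBy]

theorem applyRecs_apply_of_not_coveredBy {n : ℕ} {rs : List (Rec n)} {i : Fin n}
    (h : ¬ coveredBy rs i) (p : Page n) : applyRecs rs p i = p i := by
  induction rs generalizing p with
  | nil => rfl
  | cons r rs ih =>
    rw [coveredBy_cons, not_or] at h
    rw [applyRecs_cons, ih h.2, applyRec_apply_of_not_covers h.1]

theorem applyRecs_congr {n : ℕ} (rs : List (Rec n)) {p q : Page n}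
    (h : ∀ i, ¬ coveredBy rs i → p i = q i) : applyRecs rs p = applyRecs rs q := by
  induction rs generalizing p q with
  | nil => exact funext fun i => h i (by simp [coveredBy])
  | cons r rs ih =>
    rw [applyRecs_cons, applyRecs_cons]
    refine ih fun i hi => ?_
    by_cases hr : covers r i
    · rw [applyRec_apply_of_covers hr, applyRec_apply_of_covers hr]
    · rw [applyRec_apply_of_not_covers hr, applyRec_apply_of_not_covers hr]
      exact h i (by rw [coveredBy_cons]; tauto)

theorem applyRecs_applyRecs_of_coveredBy_imp {n : ℕ} (rs rs' : List (Rec n)) (p : Page n)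
    (hcover : ∀ i, coveredBy rs' i → coveredBy rs i) :
    applyRecs rs (applyRecs rs' p) = applyRecs rs p :=
  applyRecs_congr rs fun i hi => applyRecs_apply_of_not_coveredBy (mt (hcover i) hi) p

/-- Overwrite-record application is idempotent on suffixes:
    if every offset covered by `rs₂'` is covered by `rs₁ ++ rs₂`, then
    applying `rs₁ ++ rs₂` after first applying `rs₂'` gives the same page as
    applying `rs₁ ++ rs₂` directly; in particular
    `apply rs (apply rs p) = apply rs p`. -/
theorem apply_idempotent_on_suffixes :
    (∀ (n : ℕ) (p : Page n) (rs₁ rs₂ rs₂' : List (Rec n)),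
      (∀ i : Fin n, coveredBy rs₂' i → coveredBy (rs₁ ++ rs₂) i) →
      applyRecs (rs₁ ++ rs₂) (applyRecs rs₂' p) = applyRecs (rs₁ ++ rs₂) p) ∧
    (∀ (n : ℕ) (rs : List (Rec n)) (p : Page n),
      applyRecs rs (applyRecs rs p) = applyRecs rs p) :=
  ⟨fun _ p rs₁ rs₂ rs₂' => applyRecs_applyRecs_of_coveredBy_imp (rs₁ ++ rs₂) rs₂' p,
    fun _ rs p => applyRecs_applyRecs_of_coveredBy_imp rs rs p fun _ => id⟩
end

section
/- In the write-back-duration model, marking the write-back at wb^s is unsound: there exists a trace w₁; sync; wb^s; crash (before wb^r) such that recovery that discards NVM records with vid < the marker's exp_vid recovers a page missing w₁'s data, violating the sync semantics for (w₁, sync, crash, read). -/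
/-- NVM log entries with version ids. -/
inductive Entry (n : ℕ)
  | write (vid : ℕ) (r : Rec n)
  | wbMark (vid : ℕ) (expVid : ℕ)

/-- Algorithm 3 recovery scan. -/
def collectRev {n : ℕ} : ℕ → List (Entry n) → List (Rec n)
  | _, [] => []
  | exp, .write v r :: rest => if exp ≤ v then collectRev exp rest ++ [r] else []
  | exp, .wbMark v e :: rest => if exp ≤ v then collectRev e rest else []

/-- Marking the write-back at wb^s is unsound.
    Counterexample trace: from a consistent state V₁ on cache/disk/NVM, a
    partial sync write w₁ (NVM record with vid 0); then wb^s, which (buggily)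
    immediately persists the WRITEBACK marker with exp_vid = 1, expiring w₁'s
    record; then a crash before wb^r, so the disk still holds V₁.  Recovery
    discards w₁'s record (vid 0 < exp_vid 1) and replays nothing onto V₁,
    recovering a page missing w₁'s data: it disagrees with the synced page
    `applyRec w₁ V₁` at an offset covered by w₁, violating the sync semantics
    for (w₁, sync, crash, read). -/
theorem mark_at_wbs_unsound :
    ∃ (n : ℕ) (V₁ : Page n) (w₁ : Rec n) (i : Fin n),
      covers w₁ i ∧
      applyRecs (collectRev 0 ([Entry.write 0 w₁, Entry.wbMark 1 1] :
          List (Entry n)).reverse) V₁ i ≠ applyRec w₁ V₁ i := by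
  refine ⟨1, fun _ => 0, ⟨0, 1, fun _ => 1, by omega⟩, ⟨0, by omega⟩, ⟨Nat.le_refl 0, Nat.lt_succ_self 0⟩, ?_⟩
  simp [collectRev, applyRecs, applyRec]
end
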